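/- For every integer k ≥ 3, if a finite connected graph G contains no induced subgraph isomorphic to the disjoint union of an edge and a path on k vertices (P_2 + P_k), then the cop number of G is at most k. -/

import Mathlib

open SimpleGraph

/-- The sequence of positions in a play of the Cops and Robber game:
`(copsRobberSeq init F rob r₀ t).1` are the cop positions and `.2` the robber
position after round `t`. In each round the cops move first, then the robber. -/
def copsRobberSeq {V : Type*} {n : ℕ} (init : Fin n → V)
    (F : (Fin n → V) → V → (Fin n → V)) (rob : (Fin n → V) → V → V) (r₀ : V) :
    ℕ → (Fin n → V) × V
  | 0 => (init, r₀)
  | t + 1 =>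
      let p := copsRobberSeq init F rob r₀ t
      let c' := F p.1 p.2
      (c', rob c' p.2)

/-- `CopWinWith G n` means that `n` cops have a strategy on the graph `G`
(choice of initial positions and a move function, each move staying put or
going to an adjacent vertex) that captures the robber against every robber
strategy: at some round, some cop occupies the robber's current vertex. -/
def CopWinWith {V : Type*} (G : SimpleGraph V) (n : ℕ) : Prop :=
  ∃ (init : Fin n → V) (F : (Fin n → V) → V → (Fin n → V)),
    (∀ c r i, F c r i = c i ∨ G.Adj (c i) (F c r i)) ∧
    ∀ (r₀ : V) (rob : (Fin n → V) → V → V),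
      (∀ c r, rob c r = r ∨ G.Adj r (rob c r)) →
      ∃ t, (∃ i, (copsRobberSeq init F rob r₀ t).1 i = (copsRobberSeq init F rob r₀ t).2) ∨
           (∃ i, (copsRobberSeq init F rob r₀ (t + 1)).1 i = (copsRobberSeq init F rob r₀ t).2)

/-- The cop number of `G`: the least `n` such that `n` cops can guarantee capture. -/
noncomputable def copNumber {V : Type*} (G : SimpleGraph V) : ℕ :=
  sInf {n | CopWinWith G n}

/-!
Two cops sit on the ends of an edge `xy` for the whole game, so the robber is confined to the
vertices outside `N[x] ∪ N[y]`. The other cops build an induced path `p 0, p 1, …` there: the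
next cop walks (the robber cannot leave his component in the meantime) to a target `p j` adjacent
to `p (j - 1)` and to the robber's component, and once it guards `N[p j]` that component strictly
shrinks. If the cops ran out before the capture, `p 0, …, p (k - 2)` together with a neighbour of
`p (k - 2)` in the robber's component would be an induced `P_k` with no edge to `xy`.
-/
namespace SimpleGraph

variable {V : Type*} (G : SimpleGraph V)

def closedNbhd (a : V) : Set V := insert a (G.neighborSet a)

variable {G}

theorem mem_closedNbhd {a b : V} : b ∈ G.closedNbhd a ↔ b = a ∨ G.Adj a b := Iff.rfl

theorem mem_closedNbhd_comm {a b : V} : b ∈ G.closedNbhd a ↔ a ∈ G.closedNbhd b := by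
  simp only [mem_closedNbhd, eq_comm, G.adj_comm]

variable (G)

/-- The vertex set of the connected component of `r` in `G[A]` (just `{r}` when `r ∉ A`). -/
def componentIn (A : Set V) (r : V) : Set V :=
  {v | ((⊤ : G.Subgraph).induce A).spanningCoe.Reachable r v}

variable {G} {A A' : Set V} {r v w : V}

theorem mem_componentIn_self : r ∈ G.componentIn A r := Reachable.refl r

theorem componentIn_subset (hr : r ∈ A) : G.componentIn A r ⊆ A := by
  intro v ⟨p⟩
  by_contra hv
  obtain ⟨d, -, -, hd⟩ := p.exists_boundary_dart A hr hv
  exact hd d.adj.2.1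

theorem componentIn_mono (h : A' ⊆ A) : G.componentIn A' r ⊆ G.componentIn A r :=
  fun _ hv => hv.mono (Subgraph.spanningCoe_le_of_le (Subgraph.induce_mono_right h))

theorem componentIn_eq_of_mem (hv : v ∈ G.componentIn A r) :
    G.componentIn A v = G.componentIn A r :=
  Set.ext fun _ => ⟨hv.trans, (Reachable.symm hv).trans⟩

theorem mem_componentIn_of_adj (hr : r ∈ A) (hv : v ∈ G.componentIn A r) (hvw : G.Adj v w)
    (hw : w ∈ A) : w ∈ G.componentIn A r :=
  Reachable.trans hv (Adj.reachable ⟨componentIn_subset hr hv, hw, hvw⟩)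

theorem mem_componentIn_or_notMem (hr : r ∈ A) (hv : v ∈ G.componentIn A r)
    (hw : w ∈ G.closedNbhd v) : w ∈ G.componentIn A r ∨ w ∉ A := by
  rcases hw with rfl | hvw
  · exact Or.inl hv
  · by_cases hwA : w ∈ A
    exacts [Or.inl (mem_componentIn_of_adj hr hv hvw hwA), Or.inr hwA]

theorem exists_adj_componentIn_diff {g : V} (hr : r ∈ A) (hrg : r ∉ G.closedNbhd g)
    (hw : w ∈ G.componentIn A r) (hwg : w ∈ G.closedNbhd g) :
    ∃ z ∈ A, G.Adj g z ∧ ∃ u ∈ G.componentIn (A \ G.closedNbhd g) r, G.Adj z u := by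
  have hr' : r ∈ A \ G.closedNbhd g := ⟨hr, hrg⟩
  obtain ⟨p⟩ := hw
  have hwS : w ∉ G.componentIn (A \ G.closedNbhd g) r := fun h => (componentIn_subset hr' h).2 hwg
  obtain ⟨d, -, hfst, hsnd⟩ := p.exists_boundary_dart _ mem_componentIn_self hwS
  obtain ⟨-, hA, hadj⟩ := d.adj
  replace hadj : G.Adj d.fst d.snd := hadj
  have hfst' := componentIn_subset hr' hfst
  have hsndg : d.snd ∈ G.closedNbhd g :=
    by_contra fun h => hsnd (mem_componentIn_of_adj hr' hfst hadj ⟨hA, h⟩)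
  rcases hsndg with hg | hg
  · exact (hfst'.2 (Or.inr (hg ▸ hadj.symm))).elim
  · exact ⟨d.snd, hA, hg, d.fst, hfst, hadj.symm⟩

variable {W : Type*} {H : SimpleGraph W}

def Embedding.ofClosedNbhd (f : W → V) (hadj : ∀ a b, H.Adj a b → G.Adj (f a) (f b))
    (hfar : ∀ a b, a ≠ b → ¬ H.Adj a b → f b ∉ G.closedNbhd (f a)) : H ↪g G where
  toFun := f
  inj' a b hab :=
    by_contra fun hne => hfar a b hne (fun h => (hadj a b h).ne hab) (Or.inl hab.symm)
  map_rel_iff' {a b} := by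
    refine ⟨fun h => by_contra fun hn => hfar a b ?_ hn (Or.inr h), hadj a b⟩
    rintro rfl
    exact G.irrefl h

variable (G)

structure IsInducedPathAvoiding (x y : V) (p : ℕ → V) (n : ℕ) : Prop where
  adj : ∀ t, t + 1 < n → G.Adj (p t) (p (t + 1))
  notMem_closedNbhd : ∀ t s, t + 1 < s → s < n → p s ∉ G.closedNbhd (p t)
  notMem_closedNbhd_left : ∀ s < n, p s ∉ G.closedNbhd x
  notMem_closedNbhd_right : ∀ s < n, p s ∉ G.closedNbhd y

variable {G} {x y z : V} {p : ℕ → V}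

theorem IsInducedPathAvoiding.update {j : ℕ} (h : G.IsInducedPathAvoiding x y p (j + 1))
    (hadj : G.Adj (p j) z) (hzx : z ∉ G.closedNbhd x) (hzy : z ∉ G.closedNbhd y)
    (hzp : ∀ t < j, z ∉ G.closedNbhd (p t)) :
    G.IsInducedPathAvoiding x y (Function.update p (j + 1) z) (j + 2) := by
  have hp : ∀ t ≤ j, Function.update p (j + 1) z t = p t := fun t ht =>
    Function.update_of_ne (by omega) _ _
  have hz : Function.update p (j + 1) z (j + 1) = z := Function.update_self _ _ _
  have hall (P : V → Prop) (hP : ∀ s ≤ j, P (p s)) (hPz : P z) :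
      ∀ s < j + 2, P (Function.update p (j + 1) z s) := by
    intro s hs
    rcases (show s ≤ j ∨ s = j + 1 by omega) with hs | rfl
    · rw [hp s hs]
      exact hP s hs
    · rw [hz]
      exact hPz
  refine ⟨fun t ht => ?_, fun t s hts hs => ?_,
    hall (· ∉ G.closedNbhd x) (fun s hs => h.notMem_closedNbhd_left s (by omega)) hzx,
    hall (· ∉ G.closedNbhd y) (fun s hs => h.notMem_closedNbhd_right s (by omega)) hzy⟩
  · rcases (show t < j ∨ t = j by omega) with ht | rfl
    · rw [hp t ht.le, hp (t + 1) ht]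
      exact h.adj t (by omega)
    · rw [hp t le_rfl, hz]
      exact hadj
  · rw [hp t (by omega)]
    rcases (show s ≤ j ∨ s = j + 1 by omega) with hs | rfl
    · rw [hp s hs]
      exact h.notMem_closedNbhd t s hts (by omega)
    · rw [hz]
      exact hzp t (by omega)

def IsInducedPathAvoiding.embedding {n : ℕ} (h : G.IsInducedPathAvoiding x y p n)
    (hxy : G.Adj x y) : pathGraph 2 ⊕g pathGraph n ↪g G := by
  refine Embedding.ofClosedNbhd (Sum.elim ![x, y] (p ∘ Fin.val)) ?_ ?_
  · rintro (a | a) (b | b) hab <;> simp only [sum_adj, pathGraph_adj] at hab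
    · fin_cases a <;> fin_cases b <;> simp_all [hxy.symm]
    · rcases hab with hab | hab
      · simpa [← hab] using h.adj a (by omega)
      · simpa [← hab] using (h.adj b (by omega)).symm
  · rintro (a | a) (b | b) hne hab <;> simp only [sum_adj, pathGraph_adj] at hab
    · fin_cases a <;> fin_cases b <;> simp_all
    · fin_cases a
      exacts [h.notMem_closedNbhd_left b b.2, h.notMem_closedNbhd_right b b.2]
    · rw [mem_closedNbhd_comm]
      fin_cases b
      exacts [h.notMem_closedNbhd_left a a.2, h.notMem_closedNbhd_right a a.2]
    · have : (a : ℕ) ≠ b := fun e => hne (congrArg _ (Fin.ext e))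
      rcases Nat.lt_or_gt_of_ne this with hab' | hab'
      · exact h.notMem_closedNbhd a b (by omega) b.2
      · rw [mem_closedNbhd_comm]
        exact h.notMem_closedNbhd b a (by omega) a.2

end SimpleGraph

namespace CopsAndRobber

variable {V : Type*} (G : SimpleGraph V) {n : ℕ}

def CopMove (c c' : Fin n → V) : Prop := ∀ i, c' i ∈ G.closedNbhd (c i)

def Caught (c : Fin n → V) (r : V) : Prop := ∃ i, c i = r

/-- With the cops to move at `c` and the robber at `r`, the cops can capture within `m` rounds. -/
def WinsWithin : ℕ → (Fin n → V) → V → Prop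
  | 0, c, r => Caught c r
  | m + 1, c, r => Caught c r ∨ ∃ c', CopMove G c c' ∧
      (Caught c' r ∨ ∀ r' ∈ G.closedNbhd r, WinsWithin m c' r')

def Wins (c : Fin n → V) (r : V) : Prop := ∃ m, WinsWithin G m c r

variable {G} {c c' : Fin n → V} {r : V}

theorem WinsWithin.succ : ∀ {m : ℕ} {c : Fin n → V} {r : V},
    WinsWithin G m c r → WinsWithin G (m + 1) c r
  | 0, _, _, h => Or.inl h
  | _ + 1, _, _, Or.inl h => Or.inl h
  | _ + 1, _, _, Or.inr ⟨c', hmove, h⟩ =>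
    Or.inr ⟨c', hmove, h.imp_right fun h r' hr' => (h r' hr').succ⟩

theorem WinsWithin.mono {m m' : ℕ} (hm : m ≤ m') (h : WinsWithin G m c r) :
    WinsWithin G m' c r := by
  induction hm with
  | refl => exact h
  | step _ ih => exact ih.succ

theorem Wins.of_move [Finite V] (hmove : CopMove G c c')
    (h : Caught c' r ∨ ∀ r' ∈ G.closedNbhd r, Wins G c' r') : Wins G c r := by
  rcases h with h | h
  · exact ⟨1, Or.inr ⟨c', hmove, Or.inl h⟩⟩
  · choose! m hm using h
    obtain ⟨M, hM⟩ := (Set.finite_range m).bddAbove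
    exact ⟨M + 1, Or.inr ⟨c', hmove, Or.inr fun r' hr' =>
      (hm r' hr').mono (hM (Set.mem_range_self r'))⟩⟩

theorem copMove_update {i : Fin n} {b : V} (hb : b ∈ G.closedNbhd (c i)) :
    CopMove G c (Function.update c i b) := by
  intro l
  by_cases hl : l = i
  · subst hl
    rwa [Function.update_self]
  · rw [Function.update_of_ne hl]
    exact Or.inl rfl

theorem Wins.of_mem_closedNbhd (i : Fin n) (h : r ∈ G.closedNbhd (c i)) : Wins G c r :=
  ⟨1, Or.inr ⟨_, copMove_update h, Or.inl ⟨i, Function.update_self i r c⟩⟩⟩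

theorem wins_of_walk [Finite V] {C : Set V} (i : Fin n) {a u : V} (w : G.Walk a u)
    (c : Fin n → V) (hc : c i = a)
    (hconf : ∀ r ∈ C, ∀ r' ∈ G.closedNbhd r, r' ∈ C ∨ ∃ l ≠ i, r' ∈ G.closedNbhd (c l))
    (harrive : ∀ r ∈ C, Wins G (Function.update c i u) r) : ∀ r ∈ C, Wins G c r := by
  induction w generalizing c with
  | nil =>
    rw [← hc, Function.update_eq_self] at harrive
    exact harrive
  | @cons a b u hab w ih =>
    intro r hr
    refine Wins.of_move (copMove_update (hc ▸ Or.inr hab)) (Or.inr fun r' hr' => ?_)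
    rcases hconf r hr r' hr' with hr'C | ⟨l, hl, hr'l⟩
    · refine ih _ (Function.update_self i b c) (fun s hs s' hs' => ?_) ?_ r' hr'C
      · obtain h | ⟨l, hl, h⟩ := hconf s hs s' hs'
        exacts [Or.inl h, Or.inr ⟨l, hl, by rwa [Function.update_of_ne hl]⟩]
      · simpa only [Function.update_idem] using harrive
    · exact Wins.of_mem_closedNbhd l (by rwa [Function.update_of_ne hl])

variable (G) in
open Classical in
/-- Playing the move certified by the least `m` with `WinsWithin G (m + 1) c r` makes that bound
drop every round. -/
noncomputable def strategy (c : Fin n → V) (r : V) : Fin n → V :=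
  if h : ∃ m, ¬ Caught c r ∧ WinsWithin G (m + 1) c r then
    Classical.choose ((Nat.find_spec h).2.resolve_left (Nat.find_spec h).1)
  else c

theorem copMove_strategy (c : Fin n → V) (r : V) : CopMove G c (strategy G c r) := by
  classical
  unfold strategy
  split_ifs with h
  · exact (Classical.choose_spec ((Nat.find_spec h).2.resolve_left (Nat.find_spec h).1)).1
  · exact fun _ => Or.inl rfl

open Classical in
theorem strategy_spec (h : ∃ m, ¬ Caught c r ∧ WinsWithin G (m + 1) c r) :
    Caught (strategy G c r) r ∨
      ∀ r' ∈ G.closedNbhd r, WinsWithin G (Nat.find h) (strategy G c r) r' := by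
  unfold strategy
  rw [dif_pos h]
  exact (Classical.choose_spec ((Nat.find_spec h).2.resolve_left (Nat.find_spec h).1)).2

theorem copWinWith_of_forall_wins (init : Fin n → V) (h : ∀ r, Wins G init r) :
    CopWinWith G n := by
  classical
  refine ⟨init, strategy G, copMove_strategy, fun r₀ rob hrob => ?_⟩
  set s := copsRobberSeq init (strategy G) rob r₀
  suffices ∀ m t, WinsWithin G m (s t).1 (s t).2 →
      ∃ t, Caught (s t).1 (s t).2 ∨ Caught (s (t + 1)).1 (s t).2 from
    let ⟨m, hm⟩ := h r₀; this m 0 hm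
  intro m
  induction m with
  | zero => exact fun t ht => ⟨t, Or.inl ht⟩
  | succ m ih =>
    intro t ht
    by_cases hc : Caught (s t).1 (s t).2
    · exact ⟨t, Or.inl hc⟩
    have hex : ∃ m, ¬ Caught (s t).1 (s t).2 ∧ WinsWithin G (m + 1) (s t).1 (s t).2 :=
      ⟨m, hc, ht⟩
    rcases strategy_spec hex with hcap | hall
    · exact ⟨t, Or.inr hcap⟩
    · exact ih (t + 1) ((hall _ (hrob _ _)).mono (Nat.find_min' hex ⟨hc, ht⟩))

variable (G)

def guards (x y : V) (p : ℕ → V) : ℕ → V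
  | 0 => x
  | 1 => y
  | t + 2 => p t

def unguarded (q : ℕ → V) (m : ℕ) : Set V := {v | ∀ i < m, v ∉ G.closedNbhd (q i)}

def territory (x y : V) (p : ℕ → V) (j : ℕ) (r : V) : Set V :=
  G.componentIn (unguarded G (guards x y p) (j + 2)) r

/-- A position in which cops occupy `x`, `y`, `p 0, …, p (j - 1)`, the robber is on `r`, and the
next cop is sent to `p j`. -/
structure Chase (x y : V) (p : ℕ → V) (j : ℕ) (r : V) : Prop where
  adj : G.Adj x y
  path : G.IsInducedPathAvoiding x y p (j + 1)
  mem_unguarded : r ∈ unguarded G (guards x y p) (j + 2)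
  exists_mem_closedNbhd : ∃ w ∈ territory G x y p j r, w ∈ G.closedNbhd (p j)

variable {G} {x y z v : V} {p p' : ℕ → V} {j : ℕ}

theorem guards_congr {m i : ℕ} (h : ∀ t, t + 2 < m → p t = p' t) (hi : i < m) :
    guards x y p i = guards x y p' i := by
  match i with
  | 0 | 1 => rfl
  | t + 2 => exact h t hi

theorem mem_unguarded_guards : v ∈ unguarded G (guards x y p) (j + 2) ↔
    v ∉ G.closedNbhd x ∧ v ∉ G.closedNbhd y ∧ ∀ t < j, v ∉ G.closedNbhd (p t) := by
  refine ⟨fun h => ⟨h 0 (by omega), h 1 (by omega), fun t ht => h (t + 2) (by omega)⟩, ?_⟩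
  rintro ⟨hx, hy, hp⟩ (_ | _ | t) hi
  exacts [hx, hy, hp t (by omega)]

theorem unguarded_succ (q : ℕ → V) (m : ℕ) :
    unguarded G q (m + 1) = unguarded G q m \ G.closedNbhd (q m) := by
  ext v
  simp only [unguarded, Set.mem_ofPred_eq, Set.mem_sdiff, Nat.forall_lt_succ_right]

theorem unguarded_congr {q q' : ℕ → V} {m : ℕ} (h : ∀ i < m, q i = q' i) :
    unguarded G q m = unguarded G q' m := by
  ext v
  simp only [unguarded, Set.mem_ofPred_eq]
  exact forall₂_congr fun i hi => by rw [h i hi]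

theorem unguarded_guards_update :
    unguarded G (guards x y (Function.update p (j + 1) z)) (j + 1 + 2) =
      unguarded G (guards x y p) (j + 2) \ G.closedNbhd (p j) := by
  have hagree : ∀ i < j + 1 + 2, guards x y (Function.update p (j + 1) z) i = guards x y p i :=
    fun i => guards_congr fun t ht => Function.update_of_ne (by omega) _ _
  rw [unguarded_congr hagree, unguarded_succ]
  rfl

theorem Chase.initial (hxy : G.Adj x y) (hr : r ∈ unguarded G (guards x y fun _ => r) 2) :
    Chase G x y (fun _ => r) 0 r := by
  obtain ⟨hrx, hry, -⟩ := mem_unguarded_guards.1 hr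
  exact ⟨hxy, ⟨by omega, by omega, fun _ _ => hrx, fun _ _ => hry⟩, hr,
    r, mem_componentIn_self, Or.inl rfl⟩

theorem Chase.exists_isInducedPathAvoiding (h : Chase G x y p j r) (hj : 0 < j) :
    ∃ q, G.IsInducedPathAvoiding x y q (j + 2) := by
  obtain ⟨w, hw, hwp⟩ := h.exists_mem_closedNbhd
  obtain ⟨hwx, hwy, hwp'⟩ := mem_unguarded_guards.1 (componentIn_subset h.mem_unguarded hw)
  have hadj : G.Adj (p j) w := by
    refine hwp.resolve_left ?_
    rintro rfl
    obtain ⟨t, rfl⟩ : ∃ t, j = t + 1 := ⟨j - 1, by omega⟩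
    exact hwp' t (by omega) (Or.inr (h.path.adj t (by omega)))
  exact ⟨_, h.path.update hadj hwx hwy hwp'⟩

theorem Chase.succ {r' : V} (h : Chase G x y p j r) (hr' : r' ∈ territory G x y p j r)
    (hr'p : r' ∉ G.closedNbhd (p j)) :
    ∃ z, Chase G x y (Function.update p (j + 1) z) (j + 1) r' ∧
      territory G x y (Function.update p (j + 1) z) (j + 1) r' ⊂ territory G x y p j r := by
  have hr'A := componentIn_subset h.mem_unguarded hr'
  obtain ⟨w, hw, hwp⟩ := h.exists_mem_closedNbhd
  rw [territory, ← componentIn_eq_of_mem hr'] at hw ⊢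
  obtain ⟨z, hzA, hpz, u, hu, hzu⟩ := exists_adj_componentIn_diff hr'A hr'p hw hwp
  obtain ⟨hzx, hzy, hzp⟩ := mem_unguarded_guards.1 hzA
  have hA' : unguarded G (guards x y (Function.update p (j + 1) z)) (j + 1 + 2) =
      unguarded G (guards x y p) (j + 2) \ G.closedNbhd (p j) := unguarded_guards_update
  have hr'A' : r' ∈ unguarded G (guards x y p) (j + 2) \ G.closedNbhd (p j) := ⟨hr'A, hr'p⟩
  refine ⟨z, ⟨h.adj, h.path.update hpz hzx hzy hzp, hA' ▸ hr'A', u, ?_, ?_⟩, ?_⟩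
  · rwa [territory, hA']
  · rw [Function.update_self]
    exact Or.inr hzu
  · rw [territory, hA']
    refine (Set.ssubset_iff_of_subset (componentIn_mono Set.sdiff_subset)).2
      ⟨w, hw, fun hw' => (componentIn_subset hr'A' hw').2 hwp⟩

theorem exists_mem_closedNbhd_of_notMem_unguarded {k m : ℕ} {c : Fin k → V} {q : ℕ → V}
    (hm : m ≤ k) (hc : ∀ i : Fin k, (i : ℕ) < m → c i = q i) (hv : v ∉ unguarded G q m) :
    ∃ i : Fin k, (i : ℕ) < m ∧ v ∈ G.closedNbhd (c i) := by
  obtain ⟨i, hi, hvi⟩ : ∃ i < m, v ∈ G.closedNbhd (q i) := by simpa [unguarded] using hv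
  exact ⟨⟨i, by omega⟩, hi, by rwa [hc ⟨i, _⟩ hi]⟩

theorem update_eq_guards_update {k : ℕ} {c : Fin k → V}
    (hc : ∀ i : Fin k, (i : ℕ) < j + 2 → c i = guards x y p i) {i : Fin k} (hi : (i : ℕ) = j + 2)
    (l : Fin k) (hl : (l : ℕ) < j + 1 + 2) :
    Function.update c i (p j) l = guards x y (Function.update p (j + 1) z) l := by
  by_cases hli : l = i
  · subst hli
    rw [Function.update_self, hi]
    exact (Function.update_of_ne (by omega) _ _).symm
  · have hl' : (l : ℕ) < j + 2 := by
      have : (l : ℕ) ≠ j + 2 := hi ▸ fun e => hli (Fin.ext e)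
      omega
    rw [Function.update_of_ne hli, hc l hl']
    exact guards_congr (fun t ht => (Function.update_of_ne (by omega) _ _).symm) hl'

theorem Chase.wins [Finite V] {k : ℕ} (hk : 3 ≤ k) (hconn : G.Connected)
    (hfree : IsEmpty (pathGraph 2 ⊕g pathGraph k ↪g G)) {c : Fin k → V}
    (h : Chase G x y p j r) (hj : j + 2 ≤ k)
    (hc : ∀ i : Fin k, (i : ℕ) < j + 2 → c i = guards x y p i) : Wins G c r := by
  induction hN : (territory G x y p j r).ncard using Nat.strong_induction_on
    generalizing p j r c with
  | _ N ih =>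
  rcases hj.lt_or_eq with hj | rfl
  · let i : Fin k := ⟨j + 2, hj⟩
    obtain ⟨w⟩ := hconn (c i) (p j)
    refine wins_of_walk (C := territory G x y p j r) i w c rfl (fun s hs s' hs' => ?_)
      (fun r' hr' => ?_) r mem_componentIn_self
    · refine (mem_componentIn_or_notMem h.mem_unguarded hs hs').imp_right fun hs'A => ?_
      obtain ⟨l, hl, hs'l⟩ := exists_mem_closedNbhd_of_notMem_unguarded hj.le hc hs'A
      exact ⟨l, Fin.ne_of_val_ne hl.ne, hs'l⟩
    · by_cases hnear : r' ∈ G.closedNbhd (p j)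
      · exact Wins.of_mem_closedNbhd i (by rwa [Function.update_self])
      · obtain ⟨z, hz, hlt⟩ := h.succ hr' hnear
        exact ih _ (hN ▸ Set.ncard_lt_ncard hlt) hz (by omega)
          (update_eq_guards_update hc rfl) rfl
  · obtain ⟨q, hq⟩ := h.exists_isInducedPathAvoiding (by omega)
    exact (hfree.false (hq.embedding h.adj)).elim

end CopsAndRobber

open CopsAndRobber in
theorem cop_number_of_P2_Pk_free {V : Type*} [Fintype V] (G : SimpleGraph V) (k : ℕ)
    (hk : 3 ≤ k) (hconn : G.Connected)
    (hfree : IsEmpty ((pathGraph 2 ⊕g pathGraph k) ↪g G)) :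
    copNumber G ≤ k := by
  refine Nat.sInf_le ?_
  obtain ⟨x⟩ := hconn.nonempty
  rcases subsingleton_or_nontrivial V with hV | hV
  · exact copWinWith_of_forall_wins (fun _ => x) fun _ => ⟨0, ⟨0, by omega⟩, Subsingleton.elim _ _⟩
  obtain ⟨y, hxy⟩ := hconn.preconnected.exists_adj_of_nontrivial x
  have hinit : ∀ r, ∀ i : Fin k, (i : ℕ) < 0 + 2 →
      guards x y (fun _ => x) i = guards x y (fun _ => r) i :=
    fun _ _ => guards_congr (by omega)
  refine copWinWith_of_forall_wins (fun i => guards x y (fun _ => x) i) fun r => ?_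
  by_cases hr : r ∈ unguarded G (guards x y fun _ => r) 2
  · exact (Chase.initial hxy hr).wins hk hconn hfree (by omega) (hinit r)
  · obtain ⟨i, -, hri⟩ := exists_mem_closedNbhd_of_notMem_unguarded (by omega) (hinit r) hr
    exact Wins.of_mem_closedNbhd i hri
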